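/- arXiv:1804.06654 — 2 statements merged into one kernel-verified Lean document; each statement's English description precedes it below -/
import Mathlib

section
/- Let I be an irreducible numerical semigroup and let K ∈ ℕ be such that F(I) + K is odd and F(I) ≥ K + 1. Then there exists a numerical semigroup S with θ(I) ⊆ S ⊆ I and l(S) = K if and only if the cardinality of I∖θ(I) is at least ⌊K/2⌋. -/
def IsNumericalSemigroup (S : Set ℕ) : Prop :=
  0 ∈ S ∧ (∀ a ∈ S, ∀ b ∈ S, a + b ∈ S) ∧ Sᶜ.Finite

noncomputable def frobNS (S : Set ℕ) : ℤ :=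
  sSup (insert (-1) ((fun n : ℕ => (n : ℤ)) '' Sᶜ))

def toZNS (S : Set ℕ) : Set ℤ := {z : ℤ | ∃ n ∈ S, (n : ℤ) = z}

noncomputable def genusNS (S : Set ℕ) : ℕ := Sᶜ.ncard

def smallNS (S : Set ℕ) : Set ℕ := {s ∈ S | (s : ℤ) < frobNS S}

noncomputable def nNS (S : Set ℕ) : ℕ := (smallNS S).ncard

def LgapsNS (S : Set ℕ) : Set ℕ :=
  {x : ℕ | x ∉ S ∧ frobNS S - (x : ℤ) ∉ toZNS (smallNS S)}

noncomputable def lNS (S : Set ℕ) : ℕ := (LgapsNS S).ncard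

noncomputable def hNS (S : Set ℕ) : ℕ := sSup (LgapsNS S)

def PFNS (S : Set ℕ) : Set ℤ :=
  {x : ℤ | x ∉ toZNS S ∧ ∀ s ∈ S, s ≠ 0 → x + (s : ℤ) ∈ toZNS S}

noncomputable def typeNS (S : Set ℕ) : ℕ := (PFNS S).ncard

def msgNS (S : Set ℕ) : Set ℕ :=
  {x : ℕ | x ∈ S ∧ x ≠ 0 ∧ ∀ a ∈ S, ∀ b ∈ S, a ≠ 0 → b ≠ 0 → a + b ≠ x}

noncomputable def multNS (S : Set ℕ) : ℕ := sInf (S \ {0})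

def IsIrreducibleNS (S : Set ℕ) : Prop :=
  IsNumericalSemigroup S ∧
    ¬ ∃ T₁ T₂ : Set ℕ, IsNumericalSemigroup T₁ ∧ IsNumericalSemigroup T₂ ∧
        S ⊂ T₁ ∧ S ⊂ T₂ ∧ S = T₁ ∩ T₂

def IsSymmetricNS (S : Set ℕ) : Prop := IsIrreducibleNS S ∧ Odd (frobNS S)

def IsPseudoSymmetricNS (S : Set ℕ) : Prop := IsIrreducibleNS S ∧ Even (frobNS S)

def genNS (A : Set ℕ) : Set ℕ := (AddSubmonoid.closure A : Set ℕ)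

def IsURSYNS (S : Set ℕ) : Prop :=
  ∃ T : Set ℕ, ∃ x : ℕ, IsSymmetricNS T ∧ x ∈ msgNS T ∧ S = T \ {x}

def IsURPSYNS (S : Set ℕ) : Prop :=
  ∃ T : Set ℕ, ∃ x : ℕ, IsPseudoSymmetricNS T ∧ x ∈ msgNS T ∧ S = T \ {x}

def deltaNS (S : Set ℕ) : Set ℕ := {s ∈ S | 2 * (s : ℤ) < frobNS S}

def thetaNS (S : Set ℕ) : Set ℕ :=
  genNS (deltaNS S) ∪ {n : ℕ | frobNS S < (n : ℤ)}

noncomputable def CNS (F : ℕ) : Set ℕ :=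
  if Odd F then (({0} : Set ℕ) ∪ {n : ℕ | (F + 1) / 2 ≤ n}) \ {F}
  else (({0} : Set ℕ) ∪ {n : ℕ | F / 2 + 1 ≤ n}) \ {F}

/- Auxiliary development -/

structure GoodNS (S : Set ℕ) (F : ℕ) : Prop where
  ns : IsNumericalSemigroup S
  notMem : F ∉ S
  gt : ∀ n : ℕ, F < n → n ∈ S

namespace GoodNS

variable {S : Set ℕ} {F : ℕ}

lemma gap_le (h : GoodNS S F) {x : ℕ} (hx : x ∉ S) : x ≤ F := by
  by_contra hc
  exact hx (h.gt x (by omega))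

lemma compl_subset (h : GoodNS S F) : Sᶜ ⊆ Set.Iic F := fun x hx => h.gap_le hx

lemma frob (h : GoodNS S F) : frobNS S = (F : ℤ) := by
  unfold frobNS
  have hmem : ((F : ℕ) : ℤ) ∈ insert (-1 : ℤ) ((fun n : ℕ => (n : ℤ)) '' Sᶜ) :=
    Set.mem_insert_iff.2 (Or.inr ⟨F, h.notMem, rfl⟩)
  have hfin : (insert (-1 : ℤ) ((fun n : ℕ => (n : ℤ)) '' Sᶜ)).Finite :=
    Set.Finite.insert _ (h.ns.2.2.image _)
  apply le_antisymm
  · apply csSup_le ⟨_, hmem⟩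
    rintro z (rfl | ⟨n, hn, rfl⟩)
    · exact le_trans (by norm_num) (Int.ofNat_nonneg F)
    · show (n : ℤ) ≤ (F : ℤ)
      exact_mod_cast h.gap_le hn
  · exact le_csSup hfin.bddAbove hmem

end GoodNS

lemma exists_goodNS {I : Set ℕ} (hI : IsNumericalSemigroup I) (h1 : 1 ≤ frobNS I) :
    ∃ F : ℕ, 1 ≤ F ∧ GoodNS I F := by
  set T := insert (-1 : ℤ) ((fun n : ℕ => (n : ℤ)) '' Iᶜ) with hT
  have hfin : T.Finite := Set.Finite.insert _ (hI.2.2.image _)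
  have hne : T.Nonempty := ⟨-1, Set.mem_insert _ _⟩
  have hmem : sSup T ∈ T := hne.csSup_mem hfin
  have hfr : frobNS I = sSup T := rfl
  rw [hfr] at h1
  rcases hmem with h | ⟨n, hn, hcast⟩
  · omega
  have hcast' : (n : ℤ) = sSup T := hcast
  refine ⟨n, by omega, ⟨hI, hn, ?_⟩⟩
  intro m hm
  by_contra hc
  have h2 : ((m : ℕ) : ℤ) ≤ sSup T := by
    have := le_csSup hfin.bddAbove (Set.mem_insert_iff.2 (Or.inr ⟨m, hc, rfl⟩) : ((fun n : ℕ => (n:ℤ)) m) ∈ T)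
    exact this
  omega

lemma toZNS_coe_mem {A : Set ℕ} {n : ℕ} : ((n : ℤ) ∈ toZNS A) ↔ n ∈ A := by
  constructor
  · rintro ⟨m, hm, hcast⟩
    have : m = n := by exact_mod_cast hcast
    rwa [← this]
  · exact fun h => ⟨n, h, rfl⟩

lemma mem_smallNS {S : Set ℕ} {F : ℕ} (h : GoodNS S F) {x : ℕ} :
    x ∈ smallNS S ↔ x ∈ S ∧ x < F := by
  unfold smallNS
  rw [h.frob]
  simp only [Set.mem_setOf_eq]
  constructor <;> exact fun ⟨a, b⟩ => ⟨a, by exact_mod_cast b⟩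

lemma smallNS_finite {S : Set ℕ} {F : ℕ} (h : GoodNS S F) : (smallNS S).Finite := by
  apply Set.Finite.subset (Set.finite_Iic F)
  intro x hx
  exact le_of_lt ((mem_smallNS h).1 hx).2

lemma mem_Lgaps {S : Set ℕ} {F : ℕ} (h : GoodNS S F) {x : ℕ} :
    x ∈ LgapsNS S ↔ x ∉ S ∧ F - x ∉ S := by
  unfold LgapsNS
  rw [h.frob]
  simp only [Set.mem_setOf_eq]
  constructor
  · rintro ⟨hx, hns⟩
    refine ⟨hx, fun hc => hns ?_⟩
    have hxle : x ≤ F := h.gap_le hx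
    have hx0 : x ≠ 0 := fun h0 => hx (h0 ▸ h.ns.1)
    have : (F : ℤ) - x = ((F - x : ℕ) : ℤ) := by omega
    rw [this, toZNS_coe_mem, mem_smallNS h]
    exact ⟨hc, by omega⟩
  · rintro ⟨hx, hns⟩
    refine ⟨hx, fun hc => ?_⟩
    have hxle : x ≤ F := h.gap_le hx
    have : (F : ℤ) - x = ((F - x : ℕ) : ℤ) := by omega
    rw [this, toZNS_coe_mem, mem_smallNS h] at hc
    exact hns hc.1

lemma Lgaps_subset_compl {S : Set ℕ} : LgapsNS S ⊆ Sᶜ := fun _ hx => hx.1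
lemma count_eq {S : Set ℕ} {F : ℕ} (h : GoodNS S F) (hF1 : 1 ≤ F) :
    F + 1 = 2 * nNS S + lNS S := by
  have hcf : Sᶜ.Finite := h.ns.2.2
  have hsf := smallNS_finite h
  have hlf : (LgapsNS S).Finite := hcf.subset Lgaps_subset_compl
  -- step 1 : Iic F = smallNS S ∪ Sᶜ
  have h1 : Set.Iic F = smallNS S ∪ Sᶜ := by
    ext x
    simp only [Set.mem_Iic, Set.mem_union, Set.mem_compl_iff, mem_smallNS h]
    constructor
    · intro hx
      by_cases hxS : x ∈ S
      · have : x ≠ F := fun he => h.notMem (he ▸ hxS)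
        exact Or.inl ⟨hxS, by omega⟩
      · exact Or.inr hxS
    · rintro (⟨_, hx⟩ | hx)
      · omega
      · exact h.gap_le hx
  have hdisj1 : Disjoint (smallNS S) Sᶜ := by
    rw [Set.disjoint_right]
    intro x hx hx2
    exact hx ((mem_smallNS h).1 hx2).1
  have hcard1 : F + 1 = nNS S + genusNS S := by
    have : (Set.Iic F).ncard = F + 1 := by
      rw [show Set.Iic F = ((Finset.Iic F : Finset ℕ) : Set ℕ) by simp,
        Set.ncard_coe_finset, Nat.card_Iic]
    rw [← this, h1, Set.ncard_union_eq hdisj1 hsf hcf]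
    rfl
  -- step 2 : Sᶜ = G1 ∪ Lgaps, G1 image of smallNS
  set G1 : Set ℕ := (fun s => F - s) '' smallNS S with hG1
  have hG1sub : G1 ⊆ Sᶜ := by
    rintro _ ⟨s, hs, rfl⟩
    rw [mem_smallNS h] at hs
    intro hc
    exact h.notMem (by have := h.ns.2.1 s hs.1 (F - s) hc; rwa [Nat.add_sub_cancel' (le_of_lt hs.2)] at this)
  have h2 : Sᶜ = G1 ∪ LgapsNS S := by
    ext x
    simp only [Set.mem_union, Set.mem_compl_iff, mem_Lgaps h]
    constructor
    · intro hx
      by_cases hFx : F - x ∈ S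
      · left
        have hxle : x ≤ F := h.gap_le hx
        have hx0 : x ≠ 0 := fun h0 => hx (h0 ▸ h.ns.1)
        exact ⟨F - x, (mem_smallNS h).2 ⟨hFx, by omega⟩, show F - (F - x) = x by omega⟩
      · exact Or.inr ⟨hx, hFx⟩
    · rintro (hx | hx)
      · exact hG1sub hx
      · exact hx.1
  have hdisj2 : Disjoint G1 (LgapsNS S) := by
    rw [Set.disjoint_left]
    rintro _ ⟨s, hs, rfl⟩ hl
    rw [mem_Lgaps h] at hl
    rw [mem_smallNS h] at hs
    have : F - (F - s) = s := by omega
    rw [this] at hl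
    exact hl.2 hs.1
  have hinj : Set.InjOn (fun s => F - s) (smallNS S) := by
    intro a ha b hb hab
    rw [mem_smallNS h] at ha hb
    simp only at hab
    omega
  have hcard2 : genusNS S = nNS S + lNS S := by
    unfold genusNS lNS
    rw [h2, Set.ncard_union_eq hdisj2 (hsf.image _) hlf, hG1, Set.ncard_image_of_injOn hinj]
    rfl
  omega
section Theta

variable {I : Set ℕ} {F : ℕ}

def Isub {I : Set ℕ} (hI : IsNumericalSemigroup I) : AddSubmonoid ℕ where
  carrier := I
  zero_mem' := hI.1
  add_mem' := fun {a b} ha hb => hI.2.1 a ha b hb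

lemma mem_delta (h : GoodNS I F) {x : ℕ} : x ∈ deltaNS I ↔ x ∈ I ∧ 2 * x < F := by
  unfold deltaNS
  rw [h.frob]
  simp only [Set.mem_setOf_eq]
  constructor <;> exact fun ⟨a, b⟩ => ⟨a, by exact_mod_cast b⟩

lemma genNS_subset {A B : Set ℕ} (hB : IsNumericalSemigroup B) (hAB : A ⊆ B) :
    genNS A ⊆ B := by
  intro x hx
  have : x ∈ (Isub hB : Set ℕ) := by
    have hle : AddSubmonoid.closure A ≤ Isub hB := (AddSubmonoid.closure_le).2 hAB
    exact hle hx
  exact this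

lemma theta_subset (h : GoodNS I F) : thetaNS I ⊆ I := by
  rintro x (hx | hx)
  · exact genNS_subset h.ns (fun y hy => ((mem_delta h).1 hy).1) hx
  · rw [h.frob] at hx
    exact h.gt x (by exact_mod_cast hx)

lemma mem_theta (h : GoodNS I F) {x : ℕ} :
    x ∈ thetaNS I ↔ x ∈ genNS (deltaNS I) ∨ F < x := by
  unfold thetaNS
  rw [h.frob]
  simp only [Set.mem_union, Set.mem_setOf_eq]
  constructor <;> (rintro (hx | hx); exacts [Or.inl hx, Or.inr (by exact_mod_cast hx)])

lemma delta_subset_theta (h : GoodNS I F) : deltaNS I ⊆ thetaNS I := by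
  intro x hx
  exact (mem_theta h).2 (Or.inl (AddSubmonoid.subset_closure hx))

lemma theta_good (h : GoodNS I F) : GoodNS (thetaNS I) F := by
  refine ⟨⟨?_, ?_, ?_⟩, ?_, fun n hn => (mem_theta h).2 (Or.inr hn)⟩
  · exact (mem_theta h).2 (Or.inl (AddSubmonoid.zero_mem _))
  · intro a ha b hb
    rw [mem_theta h] at ha hb ⊢
    rcases ha with ha | ha
    · rcases hb with hb | hb
      · exact Or.inl (AddSubmonoid.add_mem _ ha hb)
      · exact Or.inr (by omega)
    · exact Or.inr (by omega)
  · apply Set.Finite.subset (Set.finite_Iic F)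
    intro x hx
    rw [Set.mem_Iic]
    by_contra hc
    exact hx ((mem_theta h).2 (Or.inr (by omega)))
  · intro hc
    rcases (mem_theta h).1 hc with hc | hc
    · exact h.notMem (genNS_subset h.ns (fun y hy => ((mem_delta h).1 hy).1) hc)
    · omega

lemma mem_diff_theta (h : GoodNS I F) {y : ℕ} (hy : y ∈ I \ thetaNS I) :
    y ∈ I ∧ F < 2 * y ∧ y < F := by
  obtain ⟨hyI, hyt⟩ := hy
  have h1 : ¬ F < y := fun hc => hyt ((mem_theta h).2 (Or.inr hc))
  have h2 : y ≠ F := fun he => h.notMem (he ▸ hyI)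
  have h3 : 2 * y ≠ F := by
    intro he
    exact h.notMem (he ▸ (by simpa [two_mul] using h.ns.2.1 y hyI y hyI))
  have h4 : ¬ 2 * y < F := by
    intro hc
    exact hyt (delta_subset_theta h ((mem_delta h).2 ⟨hyI, hc⟩))
  exact ⟨hyI, by omega, by omega⟩

lemma diff_theta_finite (h : GoodNS I F) : (I \ thetaNS I).Finite := by
  apply Set.Finite.subset (Set.finite_Iic F)
  intro y hy
  exact le_of_lt (mem_diff_theta h hy).2.2

lemma sandwich_good (h : GoodNS I F) {S : Set ℕ} (hS : IsNumericalSemigroup S)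
    (h1 : thetaNS I ⊆ S) (h2 : S ⊆ I) : GoodNS S F :=
  ⟨hS, fun hc => h.notMem (h2 hc), fun n hn => h1 ((mem_theta h).2 (Or.inr hn))⟩

lemma n_sandwich (h : GoodNS I F) {S : Set ℕ} (hS : IsNumericalSemigroup S)
    (h1 : thetaNS I ⊆ S) (h2 : S ⊆ I) :
    nNS S = nNS (thetaNS I) + (S \ thetaNS I).ncard := by
  have hg := sandwich_good h hS h1 h2
  have hgt := theta_good h
  have hsplit : smallNS S = smallNS (thetaNS I) ∪ (S \ thetaNS I) := by
    ext x
    simp only [Set.mem_union, mem_smallNS hg, mem_smallNS hgt, Set.mem_diff]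
    constructor
    · rintro ⟨hxS, hxF⟩
      by_cases hxt : x ∈ thetaNS I
      · exact Or.inl ⟨hxt, hxF⟩
      · exact Or.inr ⟨hxS, hxt⟩
    · rintro (⟨hxt, hxF⟩ | hx)
      · exact ⟨h1 hxt, hxF⟩
      · have := mem_diff_theta h ⟨h2 hx.1, hx.2⟩
        exact ⟨hx.1, this.2.2⟩
  have hdisj : Disjoint (smallNS (thetaNS I)) (S \ thetaNS I) := by
    rw [Set.disjoint_left]
    intro x hx hx2
    exact hx2.2 ((mem_smallNS hgt).1 hx).1
  have hf1 := smallNS_finite hgt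
  have hf2 : (S \ thetaNS I).Finite :=
    (diff_theta_finite h).subset (fun x hx => ⟨h2 hx.1, hx.2⟩)
  unfold nNS
  rw [hsplit, Set.ncard_union_eq hdisj hf1 hf2]

end Theta
section Irred

variable {I : Set ℕ} {F : ℕ}

lemma irred_gap (hirr : IsIrreducibleNS I) (h : GoodNS I F) (hF1 : 1 ≤ F) :
    ∀ x : ℕ, x ∉ I → 2 * x ≠ F → F - x ∈ I := by
  by_contra hc
  push_neg at hc
  obtain ⟨x0, hx0I, hx0ne, hx0F⟩ := hc
  set B : Set ℕ := {x | x ∉ I ∧ 2 * x ≠ F ∧ F - x ∉ I} with hB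
  have hBfin : B.Finite := h.ns.2.2.subset (fun y hy => hy.1)
  have hBne : B.Nonempty := ⟨x0, hx0I, hx0ne, hx0F⟩
  obtain ⟨m, hmB, hmax⟩ := Set.exists_max_image B id hBfin hBne
  obtain ⟨hmI, hmne, hmF⟩ := hmB
  have hm1 : 1 ≤ m := by
    rcases Nat.eq_zero_or_pos m with h0 | h0
    · exact absurd (h0 ▸ h.ns.1) hmI
    · exact h0
  have hmle : m ≤ F := h.gap_le hmI
  have hmlt : m < F := by
    rcases Nat.lt_or_ge m F with h0 | h0
    · exact h0
    · have : m = F := by omega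
      exact absurd (by simpa [this] using h.ns.1) hmF
  -- F - m is also in B, so F - m ≤ m, hence 2m > F
  have hFmB : F - m ∈ B := by
    refine ⟨hmF, by omega, ?_⟩
    have : F - (F - m) = m := by omega
    rw [this]; exact hmI
  have h2m : F < 2 * m := by
    have := hmax (F - m) hFmB
    simp only [id] at this
    omega
  -- T = insert m I is a numerical semigroup
  have haddm : ∀ b ∈ I, m + b ∈ insert m I := by
    intro b hb
    rcases Nat.eq_zero_or_pos b with h0 | h0
    · simp [h0]
    rcases Nat.lt_or_ge F (m + b) with hgt | hle
    · exact Set.mem_insert_iff.2 (Or.inr (h.gt _ hgt))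
    have hne' : m + b ≠ F := by
      intro he
      have : F - m = b := by omega
      exact hmF (this ▸ hb)
    by_cases hmb : m + b ∈ I
    · exact Set.mem_insert_iff.2 (Or.inr hmb)
    exfalso
    have : m + b ∈ B := by
      refine ⟨hmb, by omega, ?_⟩
      intro hcon
      have : (F - (m + b)) + b ∈ I := h.ns.2.1 _ hcon b hb
      have he : (F - (m + b)) + b = F - m := by omega
      exact hmF (he ▸ this)
    have := hmax _ this
    simp only [id] at this
    omega
  have hT : IsNumericalSemigroup (insert m I) := by
    refine ⟨Set.mem_insert_iff.2 (Or.inr h.ns.1), ?_, ?_⟩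
    · intro a ha b hb
      rcases Set.mem_insert_iff.1 ha with he | ha'
      · rcases Set.mem_insert_iff.1 hb with he2 | hb'
        · rw [he, he2]; exact Set.mem_insert_iff.2 (Or.inr (h.gt _ (by omega)))
        · rw [he]; exact haddm b hb'
      · rcases Set.mem_insert_iff.1 hb with he2 | hb'
        · rw [he2, add_comm]; exact haddm a ha'
        · exact Set.mem_insert_iff.2 (Or.inr (h.ns.2.1 a ha' b hb'))
    · exact h.ns.2.2.subset (fun y hy => by
        simp only [Set.mem_compl_iff, Set.mem_insert_iff, not_or] at hy
        exact hy.2)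
  have hU : IsNumericalSemigroup (insert F I) := by
    refine ⟨Set.mem_insert_iff.2 (Or.inr h.ns.1), ?_, ?_⟩
    · intro a ha b hb
      have key : ∀ c ∈ I, F + c ∈ insert F I := by
        intro c hc
        rcases Nat.eq_zero_or_pos c with h0 | h0
        · simp [h0]
        · exact Set.mem_insert_iff.2 (Or.inr (h.gt _ (by omega)))
      rcases Set.mem_insert_iff.1 ha with he | ha'
      · rcases Set.mem_insert_iff.1 hb with he2 | hb'
        · rw [he, he2]; exact Set.mem_insert_iff.2 (Or.inr (h.gt _ (by omega)))
        · rw [he]; exact key b hb'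
      · rcases Set.mem_insert_iff.1 hb with he2 | hb'
        · rw [he2, add_comm]; exact key a ha'
        · exact Set.mem_insert_iff.2 (Or.inr (h.ns.2.1 a ha' b hb'))
    · exact h.ns.2.2.subset (fun y hy => by
        simp only [Set.mem_compl_iff, Set.mem_insert_iff, not_or] at hy
        exact hy.2)
  apply hirr.2
  refine ⟨insert m I, insert F I, hT, hU, Set.ssubset_insert hmI, Set.ssubset_insert h.notMem, ?_⟩
  ext x
  simp only [Set.mem_inter_iff, Set.mem_insert_iff]
  constructor
  · intro hx
    exact ⟨Or.inr hx, Or.inr hx⟩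
  · rintro ⟨rfl | hx, h2⟩
    · rcases h2 with he | hx
      · omega
      · exact hx
    · exact hx

lemma lgaps_I_odd (hirr : IsIrreducibleNS I) (h : GoodNS I F) (hF1 : 1 ≤ F)
    (hodd : Odd F) : lNS I = 0 := by
  have : LgapsNS I = ∅ := by
    ext x
    simp only [Set.mem_empty_iff_false, iff_false]
    intro hx
    rw [mem_Lgaps h] at hx
    rcases eq_or_ne (2 * x) F with he | hne
    · obtain ⟨k, hk⟩ := hodd
      omega
    · exact hx.2 (irred_gap hirr h hF1 x hx.1 hne)
  rw [lNS, this, Set.ncard_empty]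

lemma lgaps_I_even (hirr : IsIrreducibleNS I) (h : GoodNS I F) (hF1 : 1 ≤ F)
    (heven : Even F) : lNS I = 1 := by
  obtain ⟨k, hk⟩ := heven
  have hkI : k ∉ I := by
    intro hc
    exact h.notMem (by rw [hk]; exact h.ns.2.1 k hc k hc)
  have : LgapsNS I = {k} := by
    ext x
    simp only [Set.mem_singleton_iff, mem_Lgaps h]
    constructor
    · rintro ⟨hx, hFx⟩
      rcases eq_or_ne (2 * x) F with he | hne
      · omega
      · exact absurd (irred_gap hirr h hF1 x hx hne) hFx
    · intro he
      have h2 : F - k = k := by omega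
      rw [he, h2]
      exact ⟨hkI, hkI⟩
  rw [lNS, this, Set.ncard_singleton]

end Irred
lemma exists_threshold (D : Finset ℕ) : ∀ k : ℕ, k ≤ D.card →
    ∃ t : ℕ, (D.filter (fun y => t ≤ y)).card = D.card - k := by
  intro k
  induction k with
  | zero => exact fun _ => ⟨0, by simp⟩
  | succ k ih =>
    intro hk
    obtain ⟨t, ht⟩ := ih (by omega)
    have hne : (D.filter (fun y => t ≤ y)).Nonempty := by
      rw [← Finset.card_pos, ht]; omega
    set t' := (D.filter (fun y => t ≤ y)).min' hne with ht'def
    have ht'mem := (D.filter (fun y => t ≤ y)).min'_mem hne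
    refine ⟨t' + 1, ?_⟩
    have heq : D.filter (fun y => t' + 1 ≤ y) = (D.filter (fun y => t ≤ y)).erase t' := by
      ext y
      simp only [Finset.mem_filter, Finset.mem_erase]
      constructor
      · rintro ⟨hy, hy2⟩
        have htt' : t ≤ t' := (Finset.mem_filter.1 ht'mem).2
        exact ⟨by omega, hy, by omega⟩
      · rintro ⟨hne2, hy, hy2⟩
        have := Finset.min'_le (D.filter (fun y => t ≤ y)) y (Finset.mem_filter.2 ⟨hy, hy2⟩)
        exact ⟨hy, by omega⟩
    rw [heq, Finset.card_erase_of_mem ht'mem, ht]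
    omega
/-- For I irreducible with F(I) + K odd and F(I) ≥ K + 1: there exists a
numerical semigroup S with θ(I) ⊆ S ⊆ I and l(S) = K iff #(I∖θ(I)) ≥ ⌊K/2⌋. -/
theorem stmt18 (I : Set ℕ) (K : ℕ) (hI : IsIrreducibleNS I)
    (hodd : Odd (frobNS I + (K : ℤ))) (hK : (K : ℤ) + 1 ≤ frobNS I) :
    (∃ S : Set ℕ, IsNumericalSemigroup S ∧ thetaNS I ⊆ S ∧ S ⊆ I ∧ lNS S = K) ↔
    K / 2 ≤ (I \ thetaNS I).ncard := by
  have hns := hI.1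
  have hfr1 : 1 ≤ frobNS I := by
    have : (0:ℤ) ≤ (K:ℤ) := Int.ofNat_nonneg K
    omega
  obtain ⟨F, hF1, h⟩ := exists_goodNS hns hfr1
  have hfrob : frobNS I = (F : ℤ) := h.frob
  have hKF : K + 1 ≤ F := by
    rw [hfrob] at hK; exact_mod_cast hK
  obtain ⟨c, hc⟩ := hodd
  rw [hfrob] at hc
  have hgt := theta_good h
  have hdfin := diff_theta_finite h
  have hco_t : F + 1 = 2 * nNS (thetaNS I) + lNS (thetaNS I) := count_eq hgt hF1
  have hco_I : F + 1 = 2 * nNS I + lNS I := count_eq h hF1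
  have hnI : nNS I = nNS (thetaNS I) + (I \ thetaNS I).ncard :=
    n_sandwich h hns (theta_subset h) (subset_refl I)
  have hlI : (lNS I = 0 ∧ ∃ r, F = 2 * r + 1) ∨ (lNS I = 1 ∧ ∃ r, F = r + r) := by
    rcases Nat.even_or_odd F with he | ho
    · exact Or.inr ⟨lgaps_I_even hI h hF1 he, he⟩
    · exact Or.inl ⟨lgaps_I_odd hI h hF1 ho, ho⟩
  constructor
  · rintro ⟨S, hSns, h1, h2, hlS⟩
    have hgS := sandwich_good h hSns h1 h2
    have hnS : nNS S = nNS (thetaNS I) + (S \ thetaNS I).ncard := n_sandwich h hSns h1 h2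
    have hco_S : F + 1 = 2 * nNS S + lNS S := count_eq hgS hF1
    have he_le : (S \ thetaNS I).ncard ≤ (I \ thetaNS I).ncard :=
      Set.ncard_le_ncard (fun x hx => ⟨h2 hx.1, hx.2⟩) hdfin
    rcases hlI with ⟨hl0, r, hr⟩ | ⟨hl1, r, hr⟩ <;> omega
  · intro hKd
    set Df : Finset ℕ := hdfin.toFinset with hDf
    have hDcard : Df.card = (I \ thetaNS I).ncard := (Set.ncard_eq_toFinset_card _ hdfin).symm
    obtain ⟨t, htm⟩ := exists_threshold Df (K / 2) (by omega)
    set A : Set ℕ := ↑(Df.filter (fun y => t ≤ y)) with hA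
    have hA_sub : A ⊆ I \ thetaNS I := by
      intro y hy
      rw [hA] at hy
      simp only [Finset.coe_filter, Set.mem_setOf_eq] at hy
      exact (hdfin.mem_toFinset).1 hy.1
    have hA_up : ∀ y ∈ A, ∀ z ∈ I \ thetaNS I, y ≤ z → z ∈ A := by
      intro y hy z hz hyz
      rw [hA] at hy ⊢
      simp only [Finset.coe_filter, Set.mem_setOf_eq] at hy ⊢
      exact ⟨hdfin.mem_toFinset.2 hz, le_trans hy.2 hyz⟩
    have hSsub : thetaNS I ∪ A ⊆ I :=
      Set.union_subset (theta_subset h) (fun y hy => (hA_sub hy).1)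
    have hSns : IsNumericalSemigroup (thetaNS I ∪ A) := by
      refine ⟨Or.inl hgt.ns.1, ?_, ?_⟩
      · intro a ha b hb
        by_cases hab : a + b ∈ thetaNS I
        · exact Or.inl hab
        · have haI : a ∈ I := by
            rcases ha with h' | h'
            exacts [theta_subset h h', (hA_sub h').1]
          have hbI : b ∈ I := by
            rcases hb with h' | h'
            exacts [theta_subset h h', (hA_sub h').1]
          have habD : a + b ∈ I \ thetaNS I := ⟨hns.2.1 a haI b hbI, hab⟩
          rcases ha with h' | h'
          · rcases hb with h'' | h''
            · exact absurd (hgt.ns.2.1 a h' b h'') hab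
            · exact Or.inr (hA_up b h'' _ habD (by omega))
          · exact Or.inr (hA_up a h' _ habD (by omega))
      · exact hgt.ns.2.2.subset (fun y hy => by
          simp only [Set.mem_compl_iff, Set.mem_union, not_or] at hy ⊢
          exact hy.1)
    refine ⟨thetaNS I ∪ A, hSns, Set.subset_union_left, hSsub, ?_⟩
    have hdiff : (thetaNS I ∪ A) \ thetaNS I = A := by
      ext y
      simp only [Set.mem_diff, Set.mem_union]
      constructor
      · rintro ⟨h1 | h1, h2⟩
        exacts [absurd h1 h2, h1]
      · intro hy
        exact ⟨Or.inr hy, (hA_sub hy).2⟩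
    have hAcard : A.ncard = (I \ thetaNS I).ncard - K / 2 := by
      rw [hA, Set.ncard_coe_finset, htm, hDcard]
    have hnS := n_sandwich h hSns Set.subset_union_left hSsub
    have hco_S := count_eq (sandwich_good h hSns Set.subset_union_left hSsub) hF1
    rw [hdiff, hAcard] at hnS
    rcases hlI with ⟨hl0, r, hr⟩ | ⟨hl1, r, hr⟩ <;> omega
end

section
/- Let F be a positive integer and let C(F) = {0} ∪ {n ∈ ℕ : n ≥ (F+1)/2}∖{F} if F is odd, and C(F) = {0} ∪ {n ∈ ℕ : n ≥ F/2 + 1}∖{F} if F is even. Then: (1) the cardinality of C(F)∖θ(C(F)) equals ⌊(F−1)/2⌋; (2) if P is an irreducible numerical semigroup with Frobenius number F, x ∈ msg(P) satisfies F/2 < x < F, 2x − F ∉ P, 3x ≠ 2F, 4x ≠ 3F, and F − x < m(P), and Q = (P∖{x}) ∪ {F − x}, then Q is a numerical semigroup with Frobenius number F and the cardinality of Q∖θ(Q) is strictly smaller than the cardinality of P∖θ(P). -/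
/-!
For `C(F)` every nonzero element exceeds `F / 2`, so `Δ(C(F)) = {0}`, `θ(C(F)) = {0} ∪ (F, ∞)` and
`C(F) ∖ θ(C(F))` is the interval `(F / 2, F)`.

An irreducible `P` with Frobenius number `F` satisfies `F - z ∈ P` for every gap `z ≠ F / 2`:
otherwise adjoin to `P` the largest gap `h` with `F - h ∉ P`, `2 h ≠ F`; maximality makes `P ∪ {h}`
a numerical semigroup, and `P = (P ∪ {h}) ∩ (P ∪ {F})`. This symmetry, together with `x` being a
minimal generator and `2x - F ∉ P`, makes `Q = (P ∖ {x}) ∪ {F - x}` closed under addition. Since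
`Δ(P) ⊆ Q`, `θ(P) ⊆ θ(Q)`; moreover `F - x ∈ Δ(Q)` while `x ∉ θ(P)`, so `Q ∖ θ(Q)` is a proper
subset of `P ∖ θ(P)`.
-/

open Set

theorem natCast_mem_toZNS {S : Set ℕ} {n : ℕ} : (n : ℤ) ∈ toZNS S ↔ n ∈ S :=
  ⟨fun ⟨_, hm, he⟩ => Int.ofNat_inj.1 he ▸ hm, fun h => ⟨n, h, rfl⟩⟩

theorem frobNS_eq_of_forall_le {S : Set ℕ} {F : ℕ} (hF : F ∉ S) (hle : ∀ n ∉ S, n ≤ F) :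
    frobNS S = F := by
  refine IsGreatest.csSup_eq ⟨mem_insert_of_mem _ ⟨F, hF, rfl⟩, ?_⟩
  rintro z (rfl | ⟨n, hn, rfl⟩)
  · omega
  · exact (Int.ofNat_le.2 (hle n hn) :)

namespace IsNumericalSemigroup

variable {S : Set ℕ} {F : ℕ}

theorem le_frobNS (hS : IsNumericalSemigroup S) {n : ℕ} (hn : n ∉ S) : (n : ℤ) ≤ frobNS S :=
  le_csSup ((hS.2.2.image _).insert _).bddAbove (mem_insert_of_mem _ ⟨n, hn, rfl⟩)

theorem le_of_notMem (hS : IsNumericalSemigroup S) (hFr : frobNS S = F) {n : ℕ} (hn : n ∉ S) :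
    n ≤ F := by
  have := hS.le_frobNS hn
  omega

theorem mem_of_lt (hS : IsNumericalSemigroup S) (hFr : frobNS S = F) {n : ℕ} (hn : F < n) :
    n ∈ S :=
  by_contra fun h => (hS.le_of_notMem hFr h).not_gt hn

theorem frobNS_notMem (hS : IsNumericalSemigroup S) (hFr : frobNS S = F) : F ∉ S := by
  have hmem : frobNS S ∈ insert (-1) ((fun n : ℕ => (n : ℤ)) '' Sᶜ) :=
    Nonempty.csSup_mem ⟨-1, mem_insert _ _⟩ ((hS.2.2.image _).insert _)
  rw [hFr] at hmem
  rcases hmem with h | ⟨n, hn, he⟩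
  · omega
  · exact Int.ofNat_inj.1 he ▸ hn

theorem insert_of_add_mem {h : ℕ} (hS : IsNumericalSemigroup S) (hh2 : h + h ∈ S)
    (hadd : ∀ b ∈ S, b ≠ 0 → h + b ∈ S) : IsNumericalSemigroup (insert h S) := by
  refine ⟨mem_insert_of_mem _ hS.1, ?_, hS.2.2.subset (compl_subset_compl.2 (subset_insert _ _))⟩
  have hadd' : ∀ b ∈ S, h + b ∈ insert h S := fun b hb => by
    rcases eq_or_ne b 0 with rfl | hb0
    · exact mem_insert _ _
    · exact mem_insert_of_mem _ (hadd b hb hb0)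
  rintro a (rfl | ha) b (rfl | hb)
  · exact mem_insert_of_mem _ hh2
  · exact hadd' b hb
  · exact add_comm b a ▸ hadd' a ha
  · exact mem_insert_of_mem _ (hS.2.1 a ha b hb)

theorem add_mem_sdiff_msgNS {x a b : ℕ} (hS : IsNumericalSemigroup S) (hx : x ∈ msgNS S)
    (ha : a ∈ S \ {x}) (hb : b ∈ S \ {x}) : a + b ∈ S \ {x} := by
  refine ⟨hS.2.1 a ha.1 b hb.1, fun h => ?_⟩
  rcases eq_or_ne a 0 with rfl | ha0
  · exact hb.2 (by simpa using h)
  rcases eq_or_ne b 0 with rfl | hb0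
  · exact ha.2 (by simpa using h)
  exact hx.2.2 a ha.1 b hb.1 ha0 hb0 h

end IsNumericalSemigroup

namespace IsIrreducibleNS

variable {S : Set ℕ} {F : ℕ}

theorem not_isNumericalSemigroup_insert (hirr : IsIrreducibleNS S) (hFr : frobNS S = F)
    {h : ℕ} (hh : h ∉ S) (hhF : h ≠ F) : ¬ IsNumericalSemigroup (insert h S) := by
  intro hT
  have hS := hirr.1
  have hFS := hS.frobNS_notMem hFr
  have hF0 : F ≠ 0 := fun h0 => hFS (h0 ▸ hS.1)
  have hTF : IsNumericalSemigroup (insert F S) :=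
    hS.insert_of_add_mem (hS.mem_of_lt hFr (by omega)) fun b _ hb0 => hS.mem_of_lt hFr (by omega)
  refine hirr.2 ⟨_, _, hT, hTF, ssubset_insert hh, ssubset_insert hFS, ?_⟩
  ext y
  simp only [mem_inter_iff, mem_insert_iff]
  constructor
  · exact fun hy => ⟨.inr hy, .inr hy⟩
  · rintro ⟨rfl | hy, rfl | hy'⟩ <;> first | exact absurd rfl hhF | assumption

theorem sub_mem_of_notMem (hirr : IsIrreducibleNS S) (hFr : frobNS S = F) {z : ℕ} (hz : z ∉ S)
    (hz2 : 2 * z ≠ F) : F - z ∈ S := by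
  have hS := hirr.1
  by_contra hFz
  set A : Set ℕ := {y | y ∉ S ∧ F - y ∉ S ∧ 2 * y ≠ F}
  have hbdd : BddAbove A := ⟨F, fun y hy => hS.le_of_notMem hFr hy.1⟩
  obtain ⟨hh, hFh, hh2⟩ : sSup A ∈ A := Nat.sSup_mem ⟨z, hz, hFz, hz2⟩ hbdd
  set h := sSup A
  have hhF : h ≤ F := hS.le_of_notMem hFr hh
  have h2h : F < 2 * h := by
    have : F - h ≤ h := le_csSup hbdd ⟨hFh, by rwa [Nat.sub_sub_self hhF], by omega⟩
    omega
  have hadd : ∀ b ∈ S, b ≠ 0 → h + b ∈ S := by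
    intro b hb hb0
    by_contra hc
    have hhb : h + b ≤ F := hS.le_of_notMem hFr hc
    have hFhb : F - (h + b) ∉ S := fun hin =>
      hFh (by simpa [show F - (h + b) + b = F - h by omega] using hS.2.1 _ hin _ hb)
    have := le_csSup hbdd (show h + b ∈ A from ⟨hc, hFhb, by omega⟩)
    omega
  have hhF' : h ≠ F := fun he => hFh (by simpa [he] using hS.1)
  exact hirr.not_isNumericalSemigroup_insert hFr hh hhF'
    (hS.insert_of_add_mem (hS.mem_of_lt hFr (by omega)) hadd)

end IsIrreducibleNS

theorem genNS_subset_s19 {A T : Set ℕ} (h0 : 0 ∈ T) (hadd : ∀ a ∈ T, ∀ b ∈ T, a + b ∈ T)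
    (hAT : A ⊆ T) : genNS A ⊆ T :=
  AddSubmonoid.closure_le (S := ⟨⟨T, fun ha hb => hadd _ ha _ hb⟩, h0⟩) |>.2 hAT

theorem genNS_eq_singleton_zero {A : Set ℕ} (hA : A ⊆ {0}) : genNS A = {0} := by
  rw [genNS, (AddSubmonoid.closure_le (S := ⊥)).2 (by simpa using hA) |> le_bot_iff.1,
    AddSubmonoid.coe_bot]

theorem mem_thetaNS_of_two_mul_lt {S : Set ℕ} {s : ℕ} (hs : s ∈ S) (h : 2 * (s : ℤ) < frobNS S) :
    s ∈ thetaNS S :=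
  .inl (AddSubmonoid.subset_closure ⟨hs, h⟩)

theorem thetaNS_subset_thetaNS {S T : Set ℕ} (hfr : frobNS S = frobNS T) (h : deltaNS S ⊆ T) :
    thetaNS S ⊆ thetaNS T := by
  have hdelta : deltaNS S ⊆ deltaNS T := fun s hs => ⟨h hs, hfr ▸ hs.2⟩
  simp only [thetaNS, hfr]
  exact union_subset_union_left _ (AddSubmonoid.closure_mono hdelta)

theorem notMem_thetaNS_of_mem_msgNS {S : Set ℕ} {x : ℕ} (hS : IsNumericalSemigroup S)
    (hx : x ∈ msgNS S) (h2x : frobNS S < 2 * x) (hxF : (x : ℤ) ≤ frobNS S) : x ∉ thetaNS S := by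
  rintro (h | h)
  · have hsub : genNS (deltaNS S) ⊆ S \ {x} :=
      genNS_subset_s19 ⟨hS.1, fun h0 => hx.2.1 (mem_singleton_iff.1 h0).symm⟩
        (fun a ha b hb => hS.add_mem_sdiff_msgNS hx ha hb)
        (fun s hs => ⟨hs.1, fun hsx => by have := hs.2; rw [mem_singleton_iff.1 hsx] at this; omega⟩)
    exact (hsub h).2 rfl
  · exact (not_lt.2 hxF) h

theorem finite_sdiff_thetaNS (S : Set ℕ) : (S \ thetaNS S).Finite :=
  (finite_Iic (frobNS S).toNat).subset fun n hn => by
    have : ¬ frobNS S < n := fun h => hn.2 (.inr h)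
    rw [mem_Iic]
    omega

theorem mem_CNS {F n : ℕ} : n ∈ CNS F ↔ (n = 0 ∨ F / 2 + 1 ≤ n) ∧ n ≠ F := by
  unfold CNS
  split_ifs with hF
  · have : (F + 1) / 2 = F / 2 + 1 := by obtain ⟨m, rfl⟩ := hF; omega
    simp [this]
  · simp

theorem frobNS_CNS (F : ℕ) : frobNS (CNS F) = F :=
  frobNS_eq_of_forall_le (by simp [mem_CNS]) fun n hn => by rw [mem_CNS] at hn; omega

theorem genNS_deltaNS_CNS (F : ℕ) : genNS (deltaNS (CNS F)) = {0} := by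
  refine genNS_eq_singleton_zero fun s ⟨hs, h2s⟩ => ?_
  rw [frobNS_CNS] at h2s
  rw [mem_CNS] at hs
  rw [mem_singleton_iff]
  omega

theorem CNS_sdiff_thetaNS (F : ℕ) : CNS F \ thetaNS (CNS F) = Ico (F / 2 + 1) F := by
  ext n
  simp only [thetaNS, genNS_deltaNS_CNS, frobNS_CNS, mem_sdiff, mem_union, mem_singleton_iff,
    mem_ofPred_eq, mem_Ico, mem_CNS]
  omega

theorem ncard_CNS_sdiff_thetaNS (F : ℕ) : (CNS F \ thetaNS (CNS F)).ncard = (F - 1) / 2 := by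
  rw [CNS_sdiff_thetaNS, ncard_Ico_nat]
  omega

section Swap

variable {P : Set ℕ} {F x : ℕ}

theorem sub_add_mem_sdiff (hP : IsNumericalSemigroup P) (hFr : frobNS P = F)
    (hsym : ∀ z ∉ P, 2 * z ≠ F → F - z ∈ P) (hx : x ∈ msgNS P) (hxF : x < F)
    (hd : 2 * x - F ∉ P) {b : ℕ} (hb : b ∈ P \ {x}) (hb0 : b ≠ 0) : F - x + b ∈ P \ {x} := by
  obtain ⟨hbP, hbx⟩ := hb
  rw [mem_singleton_iff] at hbx
  have hbd : b ≠ 2 * x - F := fun h => hd (h ▸ hbP)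
  refine ⟨?_, fun he => hbd (by rw [mem_singleton_iff] at he; omega)⟩
  by_contra hc
  have hle : F - x + b ≤ F := hP.le_of_notMem hFr hc
  have h2 : 2 * (F - x + b) ≠ F := fun he =>
    hd (by rw [show 2 * x - F = b + b by omega]; exact hP.2.1 _ hbP _ hbP)
  have hmem := hsym _ hc h2
  rw [show F - (F - x + b) = x - b by omega] at hmem
  exact hx.2.2 _ hmem _ hbP (by omega) hb0 (by omega)

theorem sub_add_sub_mem_sdiff (hsym : ∀ z ∉ P, 2 * z ≠ F → F - z ∈ P) (hxF : x < F)
    (h2x : F < 2 * x) (hd : 2 * x - F ∉ P) (h3x : 3 * x ≠ 2 * F) (h4x : 4 * x ≠ 3 * F) :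
    F - x + (F - x) ∈ P \ {x} := by
  refine ⟨?_, by rw [mem_singleton_iff]; omega⟩
  by_contra hc
  have hmem := hsym _ hc (by omega)
  rw [show F - (F - x + (F - x)) = 2 * x - F by omega] at hmem
  exact hd hmem

theorem isNumericalSemigroup_swap (hP : IsNumericalSemigroup P) (hFr : frobNS P = F)
    (hsym : ∀ z ∉ P, 2 * z ≠ F → F - z ∈ P) (hx : x ∈ msgNS P) (hxF : x < F) (h2x : F < 2 * x)
    (hd : 2 * x - F ∉ P) (h3x : 3 * x ≠ 2 * F) (h4x : 4 * x ≠ 3 * F) :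
    IsNumericalSemigroup (P \ {x} ∪ {F - x}) := by
  have hsub_add : ∀ {b}, b ∈ P \ {x} → b ≠ 0 → F - x + b ∈ P \ {x} :=
    sub_add_mem_sdiff hP hFr hsym hx hxF hd
  refine ⟨.inl ⟨hP.1, fun h0 => hx.2.1 (mem_singleton_iff.1 h0).symm⟩, ?_, ?_⟩
  · rintro a (ha | rfl) b (hb | rfl)
    · exact .inl (hP.add_mem_sdiff_msgNS hx ha hb)
    · rcases eq_or_ne a 0 with rfl | ha0
      · exact .inr (zero_add _)
      · exact .inl (add_comm (F - x) a ▸ hsub_add ha ha0)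
    · rcases eq_or_ne b 0 with rfl | hb0
      · exact .inr (add_zero _)
      · exact .inl (hsub_add hb hb0)
    · exact .inl (sub_add_sub_mem_sdiff hsym hxF h2x hd h3x h4x)
  · refine ((finite_singleton x).union hP.2.2).subset ?_
    rw [← compl_sdiff]
    exact compl_subset_compl.2 subset_union_left

theorem frobNS_swap (hP : IsNumericalSemigroup P) (hFr : frobNS P = F) (hx0 : x ≠ 0)
    (hxF : x < F) : frobNS (P \ {x} ∪ {F - x}) = F := by
  refine frobNS_eq_of_forall_le ?_ fun n hn => ?_
  · rintro (⟨hFP, -⟩ | hF)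
    · exact hP.frobNS_notMem hFr hFP
    · rw [mem_singleton_iff] at hF
      omega
  · by_cases hnP : n ∈ P
    · have : n = x := by_contra fun h => hn (.inl ⟨hnP, h⟩)
      omega
    · exact hP.le_of_notMem hFr hnP

theorem sdiff_thetaNS_swap_ssubset (hP : IsNumericalSemigroup P) (hFr : frobNS P = F)
    (hFQ : frobNS (P \ {x} ∪ {F - x}) = F) (hx : x ∈ msgNS P) (hxF : x < F) (h2x : F < 2 * x) :
    (P \ {x} ∪ {F - x}) \ thetaNS (P \ {x} ∪ {F - x}) ⊂ P \ thetaNS P := by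
  have hθ : thetaNS P ⊆ thetaNS (P \ {x} ∪ {F - x}) :=
    thetaNS_subset_thetaNS (hFr.trans hFQ.symm) fun s hs =>
      .inl ⟨hs.1, fun hsx => by have := hs.2; rw [mem_singleton_iff.1 hsx, hFr] at this; omega⟩
  have hFxθ : F - x ∈ thetaNS (P \ {x} ∪ {F - x}) :=
    mem_thetaNS_of_two_mul_lt (.inr rfl) (by rw [hFQ]; omega)
  rw [ssubset_iff_of_subset]
  · refine ⟨x, ⟨hx.1, notMem_thetaNS_of_mem_msgNS hP hx (by omega) (by omega)⟩, ?_⟩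
    rintro ⟨hxP | hxF', -⟩
    · exact hxP.2 rfl
    · rw [mem_singleton_iff] at hxF'
      omega
  · rintro y ⟨hy | hy, hyθ⟩
    · exact ⟨hy.1, fun h => hyθ (hθ h)⟩
    · exact absurd (mem_singleton_iff.1 hy ▸ hFxθ) hyθ

end Swap

theorem stmt19_general (F : ℕ) :
    ((CNS F) \ thetaNS (CNS F)).ncard = (F - 1) / 2 ∧
    (∀ P : Set ℕ, ∀ x : ℕ,
      IsIrreducibleNS P → frobNS P = (F : ℤ) → x ∈ msgNS P →
      (F : ℤ) < 2 * (x : ℤ) → x < F →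
      2 * (x : ℤ) - (F : ℤ) ∉ toZNS P →
      3 * x ≠ 2 * F → 4 * x ≠ 3 * F → F - x < multNS P →
      IsNumericalSemigroup ((P \ {x}) ∪ {F - x}) ∧
      frobNS ((P \ {x}) ∪ {F - x}) = (F : ℤ) ∧
      (((P \ {x}) ∪ {F - x}) \ thetaNS ((P \ {x}) ∪ {F - x})).ncard <
        (P \ thetaNS P).ncard) := by
  refine ⟨ncard_CNS_sdiff_thetaNS F, ?_⟩
  intro P x hirr hFr hx h2x hxF hd h3x h4x _
  have hP := hirr.1
  have h2x : F < 2 * x := by exact_mod_cast h2x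
  have hd : 2 * x - F ∉ P := fun h => hd (by simpa [h2x.le] using natCast_mem_toZNS.2 h)
  have hFQ := frobNS_swap hP hFr hx.2.1 hxF
  refine ⟨isNumericalSemigroup_swap hP hFr (fun z => hirr.sub_mem_of_notMem hFr) hx hxF h2x hd
    h3x h4x, hFQ, ncard_lt_ncard ?_ (finite_sdiff_thetaNS P)⟩
  exact sdiff_thetaNS_swap_ssubset hP hFr hFQ hx hxF h2x

/-- (1) #(C(F)∖θ(C(F))) = ⌊(F−1)/2⌋. (2) If P is irreducible with
Frobenius number F, x ∈ msg(P) with F/2 < x < F, 2x − F ∉ P, 3x ≠ 2F, 4x ≠ 3F and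
F − x < m(P), then Q = (P∖{x}) ∪ {F − x} is a numerical semigroup with Frobenius
number F and #(Q∖θ(Q)) < #(P∖θ(P)). -/
theorem stmt19 (F : ℕ) (hF : 0 < F) :
    ((CNS F) \ thetaNS (CNS F)).ncard = (F - 1) / 2 ∧
    (∀ P : Set ℕ, ∀ x : ℕ,
      IsIrreducibleNS P → frobNS P = (F : ℤ) → x ∈ msgNS P →
      (F : ℤ) < 2 * (x : ℤ) → x < F →
      2 * (x : ℤ) - (F : ℤ) ∉ toZNS P →
      3 * x ≠ 2 * F → 4 * x ≠ 3 * F → F - x < multNS P →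
      IsNumericalSemigroup ((P \ {x}) ∪ {F - x}) ∧
      frobNS ((P \ {x}) ∪ {F - x}) = (F : ℤ) ∧
      (((P \ {x}) ∪ {F - x}) \ thetaNS ((P \ {x}) ∪ {F - x})).ncard <
        (P \ thetaNS P).ncard) :=
  stmt19_general F
end
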